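/- arXiv:2405.03584 — 2 statements merged into one kernel-verified Lean document; each statement's English description precedes it below -/
import Mathlib

section
/- Let Q be a symmetric positive definite n×n matrix, D a symmetric positive definite m×m matrix, and B an m×n matrix. Then the doubly augmented matrix [[Q + 2 B^T D^{-1} B, B^T], [B, D]] is symmetric positive definite. -/
/-!
The Schur complement of the block `D` is
`(Q + 2 Bᴴ D⁻¹ B) - Bᴴ D⁻¹ B = Q + Bᴴ D⁻¹ B`, positive definite as `Q` is, and a Hermitian
block matrix whose lower-right block and its Schur complement are positive definite is itself
positive definite.
-/

open Matrix

namespace Matrix.PosDef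

variable {m n K : Type*} [Fintype m] [Fintype n] [DecidableEq n]
  [Field K] [PartialOrder K] [StarRing K] [StarOrderedRing K]

theorem fromBlocks₂₂_of_schur_complement {A : Matrix m m K} (B : Matrix m n K) {D : Matrix n n K}
    (hD : D.PosDef) [Invertible D] (hS : (A - B * D⁻¹ * Bᴴ).PosDef) :
    (fromBlocks A B Bᴴ D).PosDef := by
  refine .of_dotProduct_mulVec_pos ((IsHermitian.fromBlocks₂₂ A B hD.1).mpr hS.1) fun z hz => ?_
  rw [dotProduct_mulVec, ← Sum.elim_comp_inl_inr z, schur_complement_eq₂₂ A B _ _ hD.1,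
    ← dotProduct_mulVec, ← dotProduct_mulVec]
  by_cases hx : z ∘ Sum.inl = 0
  · have hy : z ∘ Sum.inr ≠ 0 := fun hy =>
      hz (by simpa [hx, hy] using (Sum.elim_comp_inl_inr z).symm)
    simpa [hx] using hD.dotProduct_mulVec_pos hy
  · exact add_pos_of_nonneg_of_pos (hD.posSemidef.dotProduct_mulVec_nonneg _)
      (hS.dotProduct_mulVec_pos hx)

theorem fromBlocks_doublyAugmented {Q : Matrix m m K} {D : Matrix n n K} (B : Matrix n m K)
    (hQ : Q.PosDef) (hD : D.PosDef) :
    (fromBlocks (Q + (2 : K) • (Bᴴ * D⁻¹ * B)) Bᴴ B D).PosDef := by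
  have := hD.isUnit.invertible
  have hschur : Q + (2 : K) • (Bᴴ * D⁻¹ * B) - Bᴴ * D⁻¹ * Bᴴᴴ = Q + Bᴴ * D⁻¹ * B := by
    rw [conjTranspose_conjTranspose, two_smul]; abel
  simpa using fromBlocks₂₂_of_schur_complement Bᴴ hD <| hschur ▸
    hQ.add_posSemidef (hD.inv.posSemidef.conjTranspose_mul_mul_same B)

end Matrix.PosDef

/-- The doubly augmented KKT matrix is symmetric positive definite. -/
theorem doubly_augmented_posDef {n m : ℕ}
    (Q : Matrix (Fin n) (Fin n) ℝ) (D : Matrix (Fin m) (Fin m) ℝ)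
    (B : Matrix (Fin m) (Fin n) ℝ) (hQ : Q.PosDef) (hD : D.PosDef) :
    (Matrix.fromBlocks (Q + (2 : ℝ) • (Bᵀ * D⁻¹ * B)) Bᵀ B D).PosDef := by
  simpa only [conjTranspose_eq_transpose_of_trivial] using
    PosDef.fromBlocks_doublyAugmented B hQ hD
end

section
/- If Q and D are symmetric positive definite and B is arbitrary, then the doubly augmented matrix M = [[Q + 2 B^T D^{-1} B, B^T],[B, D]] satisfies, for all v = (x, λ), v^T M v = x^T (Q + 2 B^T D^{-1} B) x + 2 x^T B^T λ + λ^T D λ = x^T Q x + ||D^{-1/2} B x + D^{1/2} λ||^2 + ||D^{-1/2} B x||^2 ≥ 0. -/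
open Matrix

lemma aux_dot {k l : ℕ} (A : Matrix (Fin k) (Fin l) ℝ) (u : Fin l → ℝ) (w : Fin k → ℝ) :
    (A.mulVec u) ⬝ᵥ w = u ⬝ᵥ (Aᵀ.mulVec w) := by
  rw [dotProduct_comm, Matrix.dotProduct_mulVec, ← Matrix.mulVec_transpose,
    dotProduct_comm]

/-- Sum-of-squares decomposition of the quadratic form of the doubly augmented KKT matrix. -/
theorem doubly_augmented_sos {n m : ℕ}
    (Q : Matrix (Fin n) (Fin n) ℝ) (D R : Matrix (Fin m) (Fin m) ℝ)
    (B : Matrix (Fin m) (Fin n) ℝ)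
    (hQ : Q.PosDef) (hD : D.PosDef) (hR : R.PosDef) (hRR : R * R = D)
    (x : Fin n → ℝ) (lam : Fin m → ℝ) :
    x ⬝ᵥ (Q + (2 : ℝ) • (Bᵀ * D⁻¹ * B)).mulVec x
        + 2 * (x ⬝ᵥ Bᵀ.mulVec lam) + lam ⬝ᵥ D.mulVec lam
      = x ⬝ᵥ Q.mulVec x
        + (R⁻¹.mulVec (B.mulVec x) + R.mulVec lam) ⬝ᵥ
            (R⁻¹.mulVec (B.mulVec x) + R.mulVec lam)
        + (R⁻¹.mulVec (B.mulVec x)) ⬝ᵥ (R⁻¹.mulVec (B.mulVec x)) ∧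
    0 ≤ x ⬝ᵥ (Q + (2 : ℝ) • (Bᵀ * D⁻¹ * B)).mulVec x
        + 2 * (x ⬝ᵥ Bᵀ.mulVec lam) + lam ⬝ᵥ D.mulVec lam := by
  have hRsymm : Rᵀ = R := hR.isHermitian.eq
  have hRdet : IsUnit R.det := isUnit_iff_ne_zero.mpr hR.det_pos.ne'
  have hRinvR : R⁻¹ * R = 1 := Matrix.nonsing_inv_mul R hRdet
  have hRtinv : (R⁻¹)ᵀ = R⁻¹ := by
    rw [Matrix.transpose_nonsing_inv, hRsymm]
  have hDinv : D⁻¹ = R⁻¹ * R⁻¹ := by rw [← hRR, Matrix.mul_inv_rev]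
  set u := R⁻¹.mulVec (B.mulVec x) with hu
  set w := R.mulVec lam with hw
  have huu : u ⬝ᵥ u = x ⬝ᵥ (Bᵀ * D⁻¹ * B).mulVec x := by
    rw [hu, aux_dot, hRtinv, Matrix.mulVec_mulVec, aux_dot, Matrix.mulVec_mulVec,
      Matrix.mulVec_mulVec, hDinv, Matrix.mul_assoc, Matrix.mul_assoc]
  have huw : u ⬝ᵥ w = x ⬝ᵥ Bᵀ.mulVec lam := by
    rw [hu, hw, aux_dot, hRtinv, Matrix.mulVec_mulVec, hRinvR, Matrix.one_mulVec, aux_dot]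
  have hww : w ⬝ᵥ w = lam ⬝ᵥ D.mulVec lam := by
    rw [hw, aux_dot, hRsymm, Matrix.mulVec_mulVec, hRR]
  have key : x ⬝ᵥ (Q + (2 : ℝ) • (Bᵀ * D⁻¹ * B)).mulVec x
        + 2 * (x ⬝ᵥ Bᵀ.mulVec lam) + lam ⬝ᵥ D.mulVec lam
      = x ⬝ᵥ Q.mulVec x + (u + w) ⬝ᵥ (u + w) + u ⬝ᵥ u := by
    simp only [Matrix.add_mulVec, dotProduct_add, add_dotProduct,
      Matrix.smul_mulVec, dotProduct_smul, smul_eq_mul]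
    rw [huu, huw, hww, dotProduct_comm w u, huw]
    ring
  refine ⟨key, ?_⟩
  rw [key]
  have h1 : 0 ≤ x ⬝ᵥ Q.mulVec x := hQ.posSemidef.dotProduct_mulVec_nonneg x
  have h2 : 0 ≤ (u + w) ⬝ᵥ (u + w) := Finset.sum_nonneg fun i _ => mul_self_nonneg _
  have h3 : 0 ≤ u ⬝ᵥ u := Finset.sum_nonneg fun i _ => mul_self_nonneg _
  positivity
end
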